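/- arXiv:1312.6811 — 2 statements merged into one kernel-verified Lean document; each statement's English description precedes it below -/
import Mathlib

section
/- Igusa's subgroup Γ_n[q,2q] := {M ∈ Γ_n[q] : (CᵗD)₀ ≡ (AᵗB)₀ ≡ 0 mod 2q}, where S₀ denotes the column formed by the diagonal of a square matrix S, is a subgroup of Sp(n,ℤ) containing Γ_n[2q]; in particular it is a congruence subgroup. -/
open Matrix

/-- The entrywise reduction map `Sp(n,ℤ) → Matrix(ℤ/qℤ)`; its kernel is the
principal congruence subgroup `Γ_n[q]`. -/
noncomputable def spReduction (n q : ℕ) :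
    Matrix.symplecticGroup (Fin n) ℤ →*
      Matrix (Fin n ⊕ Fin n) (Fin n ⊕ Fin n) (ZMod q) :=
  ((Int.castRingHom (ZMod q)).mapMatrix.toMonoidHom).comp
    (Matrix.symplecticGroup (Fin n) ℤ).subtype

/-- The principal congruence subgroup `Γ_n[q]`. -/
noncomputable def principalCongruenceSubgroup (n q : ℕ) :
    Subgroup (Matrix.symplecticGroup (Fin n) ℤ) :=
  (spReduction n q).ker

/-- Igusa's condition: `M ∈ Γ_n[q]` and the diagonals of `C ᵗD` and `A ᵗB`
are divisible by `2q`. -/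
def igusaCondition (n q : ℕ) (M : Matrix.symplecticGroup (Fin n) ℤ) : Prop :=
  M ∈ principalCongruenceSubgroup n q ∧
    (∀ i : Fin n,
      (2 * (q : ℤ)) ∣ ((M : Matrix (Fin n ⊕ Fin n) (Fin n ⊕ Fin n) ℤ).toBlocks₂₁ *
        ((M : Matrix (Fin n ⊕ Fin n) (Fin n ⊕ Fin n) ℤ).toBlocks₂₂)ᵀ) i i) ∧
    (∀ i : Fin n,
      (2 * (q : ℤ)) ∣ ((M : Matrix (Fin n ⊕ Fin n) (Fin n ⊕ Fin n) ℤ).toBlocks₁₁ *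
        ((M : Matrix (Fin n ⊕ Fin n) (Fin n ⊕ Fin n) ℤ).toBlocks₁₂)ᵀ) i i)

namespace IgusaAux

/-- Membership in the principal congruence subgroup as an entrywise divisibility. -/
lemma mem_pcs_iff (n q : ℕ) (M : Matrix.symplecticGroup (Fin n) ℤ) :
    M ∈ principalCongruenceSubgroup n q ↔
      ∀ i j, (q : ℤ) ∣ ((M : Matrix (Fin n ⊕ Fin n) (Fin n ⊕ Fin n) ℤ) i j
        - (1 : Matrix (Fin n ⊕ Fin n) (Fin n ⊕ Fin n) ℤ) i j) := by
  have h1 : ∀ i j : Fin n ⊕ Fin n,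
      (((1 : Matrix (Fin n ⊕ Fin n) (Fin n ⊕ Fin n) ℤ) i j : ℤ) : ZMod q)
        = (1 : Matrix (Fin n ⊕ Fin n) (Fin n ⊕ Fin n) (ZMod q)) i j := by
    intro i j; by_cases h : i = j <;> simp [Matrix.one_apply, h]
  have hred : spReduction n q M
      = ((M : Matrix (Fin n ⊕ Fin n) (Fin n ⊕ Fin n) ℤ).map (Int.cast : ℤ → ZMod q)) := rfl
  have key : (((M : Matrix (Fin n ⊕ Fin n) (Fin n ⊕ Fin n) ℤ).map (Int.cast : ℤ → ZMod q)) = 1)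
      ↔ ∀ i j, (((M : Matrix (Fin n ⊕ Fin n) (Fin n ⊕ Fin n) ℤ) i j : ℤ) : ZMod q)
          = (1 : Matrix (Fin n ⊕ Fin n) (Fin n ⊕ Fin n) (ZMod q)) i j := by
    constructor
    · intro h i j; rw [← h]; simp [Matrix.map_apply]
    · intro h; ext i j; simp [Matrix.map_apply, h i j]
  rw [principalCongruenceSubgroup, MonoidHom.mem_ker, hred, key]
  refine forall₂_congr fun i j => ?_
  rw [← ZMod.intCast_zmod_eq_zero_iff_dvd, Int.cast_sub, h1 i j, sub_eq_zero]

private lemma quad_dvd (q : ℕ) {n : ℕ} (T : Matrix (Fin n) (Fin n) ℤ)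
    (hsym : ∀ j k, T j k = T k j)
    (hdiag : ∀ j, (2 * (q : ℤ)) ∣ T j j) (hent : ∀ j k, (q : ℤ) ∣ T j k)
    (v : Fin n → ℤ) :
    (2 * (q : ℤ)) ∣ ∑ j, ∑ k, v j * T j k * v k := by
  have h2q : ((2 * q : ℕ) : ℤ) = 2 * (q : ℤ) := by push_cast; ring
  have hzero : ∀ x : ℤ, (2 * (q : ℤ)) ∣ x → ((x : ZMod (2 * q)) = 0) := fun x hx => by
    rw [ZMod.intCast_zmod_eq_zero_iff_dvd, h2q]; exact hx
  rw [← h2q, ← ZMod.intCast_zmod_eq_zero_iff_dvd]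
  push_cast
  rw [← Finset.sum_product']
  rw [← Finset.diag_union_offDiag, Finset.sum_union (Finset.disjoint_diag_offDiag _),
    Finset.sum_diag]
  have hd : ∀ j : Fin n, ((v j : ZMod (2 * q)) * (T j j : ℤ) * (v j : ℤ) = 0) := by
    intro j
    rw [show (((T j j : ℤ)) : ZMod (2 * q)) = 0 from hzero _ (hdiag j)]
    ring
  rw [Finset.sum_eq_zero (fun j _ => hd j), zero_add]
  refine Finset.sum_involution (fun p _ => (p.2, p.1)) ?_ ?_ ?_ ?_
  · intro p hp
    have hcast : ((v p.1 : ZMod (2*q)) * (T p.1 p.2 : ℤ) * (v p.2 : ℤ))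
        + ((v p.2 : ZMod (2*q)) * (T p.2 p.1 : ℤ) * (v p.1 : ℤ))
        = ((v p.1 * T p.1 p.2 * v p.2 + v p.2 * T p.2 p.1 * v p.1 : ℤ) : ZMod (2*q)) := by
      push_cast; ring
    rw [hcast]
    apply hzero
    obtain ⟨t, ht⟩ := hent p.1 p.2
    refine ⟨v p.1 * t * v p.2, ?_⟩
    rw [hsym p.2 p.1, ht]; ring
  · intro p hp _
    have := (Finset.mem_offDiag.mp hp).2.2
    intro hc
    exact this (congrArg Prod.snd hc)
  · intro p hp
    have h' := Finset.mem_offDiag.mp hp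
    exact Finset.mem_offDiag.mpr ⟨Finset.mem_univ _, Finset.mem_univ _, h'.2.2.symm⟩
  · intro p hp; rfl

private lemma conj0_apply {n : ℕ} (F T : Matrix (Fin n) (Fin n) ℤ) (i : Fin n) :
    (F * T * Fᵀ) i i = ∑ j, ∑ k, F i j * T j k * F i k := by
  rw [Matrix.mul_apply]
  simp only [Matrix.mul_apply, transpose_apply, Finset.sum_mul]
  exact Finset.sum_comm

private lemma conj0_diag (q : ℕ) {n : ℕ} (F T : Matrix (Fin n) (Fin n) ℤ)
    (hsym : ∀ j k, T j k = T k j)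
    (hdiag : ∀ j, (2 * (q : ℤ)) ∣ T j j) (hent : ∀ j k, (q : ℤ) ∣ T j k) (i : Fin n) :
    (2 * (q : ℤ)) ∣ (F * T * Fᵀ) i i := by
  rw [conj0_apply]
  exact quad_dvd q T hsym hdiag hent _

private lemma conj1_diag (q : ℕ) {n : ℕ} (E T : Matrix (Fin n) (Fin n) ℤ)
    (hE : ∀ j k, (q : ℤ) ∣ E j k) (hsym : ∀ j k, T j k = T k j)
    (hdiag : ∀ j, (2 * (q : ℤ)) ∣ T j j) (hent : ∀ j k, (q : ℤ) ∣ T j k) (i : Fin n) :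
    (2 * (q : ℤ)) ∣ (((1 + E : Matrix (Fin n) (Fin n) ℤ)) * T * ((1 + E : Matrix (Fin n) (Fin n) ℤ))ᵀ) i i := by
  have expand : ((1 + E : Matrix (Fin n) (Fin n) ℤ)) * T * ((1 + E : Matrix (Fin n) (Fin n) ℤ))ᵀ = T + (E * T + T * Eᵀ) + E * T * Eᵀ := by
    rw [transpose_add, transpose_one]
    noncomm_ring
  rw [expand]
  simp only [Matrix.add_apply]
  refine dvd_add (dvd_add (hdiag i) ?_) (conj0_diag q E T hsym hdiag hent i)
  have hcross : (E * T) i i + (T * Eᵀ) i i = ∑ j, 2 * (E i j * T i j) := by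
    simp only [Matrix.mul_apply, transpose_apply, ← Finset.sum_add_distrib]
    refine Finset.sum_congr rfl fun j _ => ?_
    rw [hsym j i]; ring
  rw [hcross]
  refine Finset.dvd_sum fun j _ => ?_
  obtain ⟨e, he⟩ := hE i j
  exact ⟨e * T i j, by rw [he]; ring⟩

private lemma block_identity {n : ℕ} (P Q A' B' C' D' : Matrix (Fin n) (Fin n) ℤ)
    (h : A' * D'ᵀ = 1 + B' * C'ᵀ) :
    (P * A' + Q * C') * (P * B' + Q * D')ᵀ
      = P * Qᵀ + P * (A' * B'ᵀ) * Pᵀ + Q * (C' * D'ᵀ) * Qᵀ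
        + (P * (B' * C'ᵀ) * Qᵀ + (P * (B' * C'ᵀ) * Qᵀ)ᵀ) := by
  have ht : (P * B' + Q * D')ᵀ = B'ᵀ * Pᵀ + D'ᵀ * Qᵀ := by
    rw [transpose_add, transpose_mul, transpose_mul]
  have hS : (P * (B' * C'ᵀ) * Qᵀ)ᵀ = Q * (C' * B'ᵀ) * Pᵀ := by
    simp [transpose_mul, transpose_transpose, Matrix.mul_assoc]
  rw [ht, hS]
  have key : P * A' * (D'ᵀ * Qᵀ) = P * Qᵀ + P * (B' * C'ᵀ) * Qᵀ := by
    calc P * A' * (D'ᵀ * Qᵀ) = P * (A' * D'ᵀ) * Qᵀ := by noncomm_ring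
    _ = P * (1 + B' * C'ᵀ) * Qᵀ := by rw [h]
    _ = P * Qᵀ + P * (B' * C'ᵀ) * Qᵀ := by noncomm_ring
  rw [add_mul, mul_add, mul_add, key]
  noncomm_ring

private lemma sympl_rel {n : ℕ} (N : Matrix (Fin n ⊕ Fin n) (Fin n ⊕ Fin n) ℤ)
    (hN : N ∈ Matrix.symplecticGroup (Fin n) ℤ) :
    N.toBlocks₁₁ * N.toBlocks₂₂ᵀ = 1 + N.toBlocks₁₂ * N.toBlocks₂₁ᵀ ∧
    N.toBlocks₁₂ * N.toBlocks₁₁ᵀ = N.toBlocks₁₁ * N.toBlocks₁₂ᵀ ∧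
    N.toBlocks₂₂ * N.toBlocks₂₁ᵀ = N.toBlocks₂₁ * N.toBlocks₂₂ᵀ := by
  have h : fromBlocks N.toBlocks₁₁ N.toBlocks₁₂ N.toBlocks₂₁ N.toBlocks₂₂ * Matrix.J (Fin n) ℤ *
      (fromBlocks N.toBlocks₁₁ N.toBlocks₁₂ N.toBlocks₂₁ N.toBlocks₂₂)ᵀ = Matrix.J (Fin n) ℤ := by
    rw [fromBlocks_toBlocks]; exact SymplecticGroup.mem_iff.mp hN
  rw [Matrix.J, fromBlocks_transpose, fromBlocks_multiply, fromBlocks_multiply] at h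
  simp only [Matrix.mul_zero, Matrix.zero_mul, Matrix.mul_one, Matrix.one_mul, Matrix.mul_neg,
    Matrix.neg_mul, zero_add, add_zero, mul_zero, mul_one, mul_neg, neg_mul] at h
  have h11 := congrArg Matrix.toBlocks₁₁ h
  have h12 := congrArg Matrix.toBlocks₁₂ h
  have h22 := congrArg Matrix.toBlocks₂₂ h
  simp only [toBlocks_fromBlocks₁₁, toBlocks_fromBlocks₁₂, toBlocks_fromBlocks₂₂] at h11 h12 h22
  refine ⟨?_, add_neg_eq_zero.mp h11, add_neg_eq_zero.mp h22⟩
  have h12' : N.toBlocks₁₂ * N.toBlocks₂₁ᵀ = -1 + N.toBlocks₁₁ * N.toBlocks₂₂ᵀ := by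
    rw [← h12]; abel
  rw [h12']; abel



private lemma ent_mul_transpose {n q : ℕ} (X Y : Matrix (Fin n) (Fin n) ℤ)
    (hY : ∀ j k, (q : ℤ) ∣ Y j k) (j k : Fin n) : (q : ℤ) ∣ (X * Yᵀ) j k := by
  simp only [Matrix.mul_apply, transpose_apply]
  exact Finset.dvd_sum fun m _ => (hY k m).mul_left _

private lemma sym_entry {n : ℕ} {X : Matrix (Fin n) (Fin n) ℤ} (h : Xᵀ = X) (j k : Fin n) :
    X j k = X k j := by
  conv_rhs => rw [← h]
  exact (Matrix.transpose_apply X k j).symm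

private lemma blocks_dvd (q : ℕ) {n : ℕ} (Mm : Matrix (Fin n ⊕ Fin n) (Fin n ⊕ Fin n) ℤ)
    (hdM : ∀ i j, (q : ℤ) ∣ (Mm i j - (1 : Matrix (Fin n ⊕ Fin n) (Fin n ⊕ Fin n) ℤ) i j)) :
    (∀ j k, (q : ℤ) ∣ (Mm.toBlocks₁₁ - 1) j k) ∧ (∀ j k, (q : ℤ) ∣ Mm.toBlocks₁₂ j k) ∧
    (∀ j k, (q : ℤ) ∣ Mm.toBlocks₂₁ j k) ∧ (∀ j k, (q : ℤ) ∣ (Mm.toBlocks₂₂ - 1) j k) := by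
  refine ⟨fun j k => ?_, fun j k => ?_, fun j k => ?_, fun j k => ?_⟩
  · have h := hdM (Sum.inl j) (Sum.inl k)
    have e : (Mm.toBlocks₁₁ - 1) j k
        = Mm (Sum.inl j) (Sum.inl k)
          - (1 : Matrix (Fin n ⊕ Fin n) (Fin n ⊕ Fin n) ℤ) (Sum.inl j) (Sum.inl k) := by
      by_cases hjk : j = k <;>
        simp [Matrix.sub_apply, Matrix.toBlocks₁₁, Matrix.one_apply, hjk]
    rw [e]; exact h
  · have h := hdM (Sum.inl j) (Sum.inr k)
    have e : Mm.toBlocks₁₂ j k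
        = Mm (Sum.inl j) (Sum.inr k)
          - (1 : Matrix (Fin n ⊕ Fin n) (Fin n ⊕ Fin n) ℤ) (Sum.inl j) (Sum.inr k) := by
      simp [Matrix.toBlocks₁₂, Matrix.one_apply]
    rw [e]; exact h
  · have h := hdM (Sum.inr j) (Sum.inl k)
    have e : Mm.toBlocks₂₁ j k
        = Mm (Sum.inr j) (Sum.inl k)
          - (1 : Matrix (Fin n ⊕ Fin n) (Fin n ⊕ Fin n) ℤ) (Sum.inr j) (Sum.inl k) := by
      simp [Matrix.toBlocks₂₁, Matrix.one_apply]
    rw [e]; exact h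
  · have h := hdM (Sum.inr j) (Sum.inr k)
    have e : (Mm.toBlocks₂₂ - 1) j k
        = Mm (Sum.inr j) (Sum.inr k)
          - (1 : Matrix (Fin n ⊕ Fin n) (Fin n ⊕ Fin n) ℤ) (Sum.inr j) (Sum.inr k) := by
      by_cases hjk : j = k <;>
        simp [Matrix.sub_apply, Matrix.toBlocks₂₂, Matrix.one_apply, hjk]
    rw [e]; exact h

private lemma toBlocks_mul {n : ℕ} (X Y : Matrix (Fin n ⊕ Fin n) (Fin n ⊕ Fin n) ℤ) :
    (X * Y).toBlocks₁₁ = X.toBlocks₁₁ * Y.toBlocks₁₁ + X.toBlocks₁₂ * Y.toBlocks₂₁ ∧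
    (X * Y).toBlocks₁₂ = X.toBlocks₁₁ * Y.toBlocks₁₂ + X.toBlocks₁₂ * Y.toBlocks₂₂ ∧
    (X * Y).toBlocks₂₁ = X.toBlocks₂₁ * Y.toBlocks₁₁ + X.toBlocks₂₂ * Y.toBlocks₂₁ ∧
    (X * Y).toBlocks₂₂ = X.toBlocks₂₁ * Y.toBlocks₁₂ + X.toBlocks₂₂ * Y.toBlocks₂₂ := by
  refine ⟨?_, ?_, ?_, ?_⟩ <;>
  · conv_lhs => rw [← fromBlocks_toBlocks X, ← fromBlocks_toBlocks Y, fromBlocks_multiply]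
    simp [toBlocks_fromBlocks₁₁, toBlocks_fromBlocks₁₂, toBlocks_fromBlocks₂₁,
      toBlocks_fromBlocks₂₂]

private lemma key_mul (q : ℕ) {n : ℕ} (Mm Nm : Matrix (Fin n ⊕ Fin n) (Fin n ⊕ Fin n) ℤ)
    (hNs : Nm ∈ Matrix.symplecticGroup (Fin n) ℤ)
    (hdM : ∀ i j, (q : ℤ) ∣ (Mm i j - (1 : Matrix (Fin n ⊕ Fin n) (Fin n ⊕ Fin n) ℤ) i j))
    (hdN : ∀ i j, (q : ℤ) ∣ (Nm i j - (1 : Matrix (Fin n ⊕ Fin n) (Fin n ⊕ Fin n) ℤ) i j))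
    (hMCD : ∀ i, (2 * (q : ℤ)) ∣ (Mm.toBlocks₂₁ * Mm.toBlocks₂₂ᵀ) i i)
    (hMAB : ∀ i, (2 * (q : ℤ)) ∣ (Mm.toBlocks₁₁ * Mm.toBlocks₁₂ᵀ) i i)
    (hNCD : ∀ i, (2 * (q : ℤ)) ∣ (Nm.toBlocks₂₁ * Nm.toBlocks₂₂ᵀ) i i)
    (hNAB : ∀ i, (2 * (q : ℤ)) ∣ (Nm.toBlocks₁₁ * Nm.toBlocks₁₂ᵀ) i i) :
    (∀ i, (2 * (q : ℤ)) ∣ ((Mm * Nm).toBlocks₂₁ * ((Mm * Nm).toBlocks₂₂)ᵀ) i i) ∧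
    (∀ i, (2 * (q : ℤ)) ∣ ((Mm * Nm).toBlocks₁₁ * ((Mm * Nm).toBlocks₁₂)ᵀ) i i) := by
  obtain ⟨hrel, hs1, hs2⟩ := sympl_rel Nm hNs
  obtain ⟨hA, hB, hC, hD⟩ := blocks_dvd q Mm hdM
  obtain ⟨hA', hB', hC', hD'⟩ := blocks_dvd q Nm hdN
  obtain ⟨hb11, hb12, hb21, hb22⟩ := toBlocks_mul Mm Nm
  -- symmetry and divisibility of the two Gram matrices of N
  have hsymT₁ : ∀ j k, (Nm.toBlocks₁₁ * Nm.toBlocks₁₂ᵀ) j k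
      = (Nm.toBlocks₁₁ * Nm.toBlocks₁₂ᵀ) k j := by
    refine sym_entry ?_
    rw [transpose_mul, transpose_transpose, hs1]
  have hsymT₂ : ∀ j k, (Nm.toBlocks₂₁ * Nm.toBlocks₂₂ᵀ) j k
      = (Nm.toBlocks₂₁ * Nm.toBlocks₂₂ᵀ) k j := by
    refine sym_entry ?_
    rw [transpose_mul, transpose_transpose, hs2]
  have hentT₁ : ∀ j k, (q : ℤ) ∣ (Nm.toBlocks₁₁ * Nm.toBlocks₁₂ᵀ) j k :=
    ent_mul_transpose _ _ hB'
  have hentT₂ : ∀ j k, (q : ℤ) ∣ (Nm.toBlocks₂₁ * Nm.toBlocks₂₂ᵀ) j k := by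
    intro j k
    rw [Matrix.mul_apply]
    exact Finset.dvd_sum fun m _ => (hC' j m).mul_right _
  have hSent : ∀ (P : Matrix (Fin n) (Fin n) ℤ) j k,
      (q : ℤ) ∣ (P * (Nm.toBlocks₁₂ * Nm.toBlocks₂₁ᵀ)) j k := by
    intro P j k
    rw [Matrix.mul_apply]
    exact Finset.dvd_sum fun m _ => ((ent_mul_transpose _ _ hC' m k)).mul_left _
  constructor
  · -- CD condition of the product: P := C, Q := D
    intro i
    rw [hb21, hb22,
      block_identity Mm.toBlocks₂₁ Mm.toBlocks₂₂ Nm.toBlocks₁₁ Nm.toBlocks₁₂ Nm.toBlocks₂₁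
        Nm.toBlocks₂₂ hrel]
    simp only [Matrix.add_apply]
    refine dvd_add (dvd_add (dvd_add (hMCD i) ?_) ?_) ?_
    · exact conj0_diag q _ _ hsymT₁ hNAB hentT₁ i
    · rw [show Mm.toBlocks₂₂ = 1 + (Mm.toBlocks₂₂ - 1) from by abel]
      exact conj1_diag q _ _ hD hsymT₂ hNCD hentT₂ i
    · have e : ((Mm.toBlocks₂₁ * (Nm.toBlocks₁₂ * Nm.toBlocks₂₁ᵀ) * Mm.toBlocks₂₂ᵀ) i i)
          + ((Mm.toBlocks₂₁ * (Nm.toBlocks₁₂ * Nm.toBlocks₂₁ᵀ) * Mm.toBlocks₂₂ᵀ)ᵀ i i)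
          = 2 * ((Mm.toBlocks₂₁ * (Nm.toBlocks₁₂ * Nm.toBlocks₂₁ᵀ) * Mm.toBlocks₂₂ᵀ) i i) := by
        rw [transpose_apply]; ring
      rw [e]
      refine mul_dvd_mul_left 2 ?_
      rw [Matrix.mul_apply]
      exact Finset.dvd_sum fun m _ => (hSent _ i m).mul_right _
  · -- AB condition of the product: P := A, Q := B
    intro i
    rw [hb11, hb12,
      block_identity Mm.toBlocks₁₁ Mm.toBlocks₁₂ Nm.toBlocks₁₁ Nm.toBlocks₁₂ Nm.toBlocks₂₁
        Nm.toBlocks₂₂ hrel]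
    simp only [Matrix.add_apply]
    refine dvd_add (dvd_add (dvd_add (hMAB i) ?_) ?_) ?_
    · rw [show Mm.toBlocks₁₁ = 1 + (Mm.toBlocks₁₁ - 1) from by abel]
      exact conj1_diag q _ _ hA hsymT₁ hNAB hentT₁ i
    · exact conj0_diag q _ _ hsymT₂ hNCD hentT₂ i
    · have e : ((Mm.toBlocks₁₁ * (Nm.toBlocks₁₂ * Nm.toBlocks₂₁ᵀ) * Mm.toBlocks₁₂ᵀ) i i)
          + ((Mm.toBlocks₁₁ * (Nm.toBlocks₁₂ * Nm.toBlocks₂₁ᵀ) * Mm.toBlocks₁₂ᵀ)ᵀ i i)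
          = 2 * ((Mm.toBlocks₁₁ * (Nm.toBlocks₁₂ * Nm.toBlocks₂₁ᵀ) * Mm.toBlocks₁₂ᵀ) i i) := by
        rw [transpose_apply]; ring
      rw [e]
      refine mul_dvd_mul_left 2 ?_
      rw [Matrix.mul_apply]
      exact Finset.dvd_sum fun m _ => (hSent _ i m).mul_right _

lemma igusa_mul {n q : ℕ} {M N : Matrix.symplecticGroup (Fin n) ℤ}
    (hM : igusaCondition n q M) (hN : igusaCondition n q N) :
    igusaCondition n q (M * N) := by
  obtain ⟨hMq, hMCD, hMAB⟩ := hM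
  obtain ⟨hNq, hNCD, hNAB⟩ := hN
  have hcoe : ((M * N : Matrix.symplecticGroup (Fin n) ℤ) :
      Matrix (Fin n ⊕ Fin n) (Fin n ⊕ Fin n) ℤ)
      = (M : Matrix (Fin n ⊕ Fin n) (Fin n ⊕ Fin n) ℤ)
        * (N : Matrix (Fin n ⊕ Fin n) (Fin n ⊕ Fin n) ℤ) := rfl
  have hkey := key_mul q (M : Matrix (Fin n ⊕ Fin n) (Fin n ⊕ Fin n) ℤ)
    (N : Matrix (Fin n ⊕ Fin n) (Fin n ⊕ Fin n) ℤ) N.2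
    ((mem_pcs_iff n q M).mp hMq) ((mem_pcs_iff n q N).mp hNq) hMCD hMAB hNCD hNAB
  refine ⟨mul_mem hMq hNq, ?_, ?_⟩
  · rw [hcoe]; exact hkey.1
  · rw [hcoe]; exact hkey.2

end IgusaAux
namespace IgusaAux

lemma igusa_one {n q : ℕ} : igusaCondition n q 1 := by
  have hone : ((1 : Matrix.symplecticGroup (Fin n) ℤ) :
      Matrix (Fin n ⊕ Fin n) (Fin n ⊕ Fin n) ℤ) = 1 := rfl
  have h21 : (1 : Matrix (Fin n ⊕ Fin n) (Fin n ⊕ Fin n) ℤ).toBlocks₂₁ = 0 := by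
    ext j k; simp [Matrix.toBlocks₂₁, Matrix.one_apply]
  have h12 : (1 : Matrix (Fin n ⊕ Fin n) (Fin n ⊕ Fin n) ℤ).toBlocks₁₂ = 0 := by
    ext j k; simp [Matrix.toBlocks₁₂, Matrix.one_apply]
  refine ⟨one_mem _, fun i => ?_, fun i => ?_⟩
  · rw [hone, h21, Matrix.zero_mul]; simp
  · rw [hone, h12, transpose_zero, Matrix.mul_zero]; simp

lemma igusa_of_two {n q : ℕ} {M : Matrix.symplecticGroup (Fin n) ℤ}
    (hM : M ∈ principalCongruenceSubgroup n (2 * q)) : igusaCondition n q M := by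
  have hd := (mem_pcs_iff n (2 * q) M).mp hM
  have h2q : ((2 * q : ℕ) : ℤ) = 2 * (q : ℤ) := by push_cast; ring
  have hd' : ∀ i j, (2 * (q : ℤ)) ∣ ((M : Matrix (Fin n ⊕ Fin n) (Fin n ⊕ Fin n) ℤ) i j
      - (1 : Matrix (Fin n ⊕ Fin n) (Fin n ⊕ Fin n) ℤ) i j) := fun i j => h2q ▸ hd i j
  obtain ⟨hA, hB, hC, hD⟩ := blocks_dvd (2 * q) (M : Matrix (Fin n ⊕ Fin n) (Fin n ⊕ Fin n) ℤ) hd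
  have hB' : ∀ j k, (2 * (q : ℤ)) ∣ (M : Matrix (Fin n ⊕ Fin n) (Fin n ⊕ Fin n) ℤ).toBlocks₁₂ j k :=
    fun j k => h2q ▸ hB j k
  have hC' : ∀ j k, (2 * (q : ℤ)) ∣ (M : Matrix (Fin n ⊕ Fin n) (Fin n ⊕ Fin n) ℤ).toBlocks₂₁ j k :=
    fun j k => h2q ▸ hC j k
  refine ⟨?_, fun i => ?_, fun i => ?_⟩
  · rw [mem_pcs_iff]
    intro i j
    exact dvd_trans ⟨2, by push_cast; ring⟩ (hd i j)
  · rw [Matrix.mul_apply]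
    exact Finset.dvd_sum fun m _ => (hC' i m).mul_right _
  · exact ent_mul_transpose _ _ hB' i i

lemma igusa_pow {n q : ℕ} {M : Matrix.symplecticGroup (Fin n) ℤ}
    (hM : igusaCondition n q M) : ∀ k : ℕ, igusaCondition n q (M ^ k) := by
  intro k
  induction k with
  | zero => rw [pow_zero]; exact igusa_one
  | succ k ih => rw [pow_succ]; exact igusa_mul ih hM

lemma exists_pow_mem {n : ℕ} (q : ℕ) (hq : 0 < q) (M : Matrix.symplecticGroup (Fin n) ℤ) :
    ∃ k : ℕ, 0 < k ∧ M ^ k ∈ principalCongruenceSubgroup n (2 * q) := by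
  haveI : NeZero (2 * q) := ⟨by omega⟩
  set f := (spReduction n (2 * q)).toHomUnits with hf
  obtain ⟨a, b, hab, h⟩ := Finite.exists_ne_map_eq_of_infinite (fun k : ℕ => f M ^ k)
  rcases Nat.lt_or_ge a b with hlt | hge
  · refine ⟨b - a, by omega, ?_⟩
    have hu : f M ^ (b - a) = 1 := by
      rw [pow_sub (f M) (le_of_lt hlt), ← h, mul_inv_cancel]
    rw [principalCongruenceSubgroup, MonoidHom.mem_ker]
    have : f (M ^ (b - a)) = 1 := by rw [map_pow, hu]
    calc spReduction n (2 * q) (M ^ (b - a)) = ((f (M ^ (b - a)) : _)) := by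
          rw [MonoidHom.coe_toHomUnits]
    _ = 1 := by rw [this, Units.val_one]
  · have hlt : b < a := by omega
    refine ⟨a - b, by omega, ?_⟩
    have hu : f M ^ (a - b) = 1 := by
      rw [pow_sub (f M) (le_of_lt hlt), h, mul_inv_cancel]
    rw [principalCongruenceSubgroup, MonoidHom.mem_ker]
    have : f (M ^ (a - b)) = 1 := by rw [map_pow, hu]
    calc spReduction n (2 * q) (M ^ (a - b)) = ((f (M ^ (a - b)) : _)) := by
          rw [MonoidHom.coe_toHomUnits]
    _ = 1 := by rw [this, Units.val_one]

lemma igusa_inv {n q : ℕ} (hq : 0 < q) {M : Matrix.symplecticGroup (Fin n) ℤ}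
    (hM : igusaCondition n q M) : igusaCondition n q M⁻¹ := by
  obtain ⟨k, hk, hmem⟩ := exists_pow_mem q hq M
  obtain ⟨e, rfl⟩ : ∃ e, k = e + 1 := ⟨k - 1, by omega⟩
  have h1 : igusaCondition n q ((M ^ (e + 1))⁻¹) := igusa_of_two (inv_mem hmem)
  have h2 : igusaCondition n q (M ^ e) := igusa_pow hM e
  have h3 : M⁻¹ = M ^ e * (M ^ (e + 1))⁻¹ := by group
  rw [h3]
  exact igusa_mul h2 h1

end IgusaAux


/-- Igusa's subgroup `Γ_n[q,2q]` is a subgroup of `Sp(n,ℤ)` containing `Γ_n[2q]`;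
in particular it is a congruence subgroup. -/
theorem igusa_subgroup_exists (n q : ℕ) (hq : 0 < q) :
    ∃ H : Subgroup (Matrix.symplecticGroup (Fin n) ℤ),
      (∀ M, M ∈ H ↔ igusaCondition n q M) ∧
        principalCongruenceSubgroup n (2 * q) ≤ H := by
  refine ⟨{ carrier := {M | igusaCondition n q M}
            one_mem' := IgusaAux.igusa_one
            mul_mem' := fun ha hb => IgusaAux.igusa_mul ha hb
            inv_mem' := fun ha => IgusaAux.igusa_inv hq ha },
    fun M => Iff.rfl, fun M hM => IgusaAux.igusa_of_two hM⟩
end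

section
/- The ten even theta nullwerte θ₁,…,θ₁₀ of genus 2 satisfy the Riemann relation θ₇⁴ − θ₈⁴ − θ₉⁴ + θ₁₀⁴ = 0 identically on the Siegel upper half-space, where θ₇,…,θ₁₀ correspond to the even characteristics (1,0,0,0), (1,0,0,1), (1,1,0,0), (1,1,1,1) respectively. -/
open Matrix

/-- The genus-2 Siegel upper half-space. -/
def SiegelH2 : Set (Matrix (Fin 2) (Fin 2) ℂ) :=
  {Z | Z.IsSymm ∧ (Z.map Complex.im).PosDef}

/-- The genus-2 theta nullwert
`θ[m](Z) = Σ_{g∈ℤ²} exp(πi(Z[g+a/2] + ᵗ(g+a/2)b))` for `m = (a,b)`. -/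
noncomputable def thetaNull (a b : Fin 2 → ℤ) (Z : Matrix (Fin 2) (Fin 2) ℂ) : ℂ :=
  ∑' g : Fin 2 → ℤ,
    Complex.exp ((Real.pi : ℂ) * Complex.I *
      ((fun i => (g i : ℂ) + (a i : ℂ) / 2) ⬝ᵥ
          Z *ᵥ (fun i => (g i : ℂ) + (a i : ℂ) / 2) +
        (fun i => (g i : ℂ) + (a i : ℂ) / 2) ⬝ᵥ (fun i => (b i : ℂ))))

open Complex Real

/-!
Collect the four summation variables of a fourth power as the rows of an integer matrix in
doubled coordinates `U = 2G + a`. Then `θ[a,0]⁴ − θ[a,b]⁴` is the sum of `2 exp(πi/4 · tr(U Z Uᵀ))`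
over the `U ≡ a (mod 2)` with `Σᵢ Uᵢ·b ≡ 2 (mod 4)`, because the factor `1 − (−1)^…` kills all
other terms. The form `tr(U Z Uᵀ)` is unchanged by `U ↦ MU/2` whenever `MᵀM = 4`, e.g. for
`M = 2 − J` (twice the reflection in `(1,1,1,1)`) and for the Hadamard matrix. Choosing between
the two according to `Σᵢ Uᵢ₀ mod 4` gives an involution exchanging the index sets of `(θ₇, θ₈)`
and `(θ₉, θ₁₀)`, hence `θ₇⁴ − θ₈⁴ = θ₉⁴ − θ₁₀⁴`.
-/

section FinPiProduct

variable {R ι : Type*} [NormedCommRing R]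

theorem summable_norm_fin_pi_prod {n : ℕ} {f : Fin n → ι → R}
    (hf : ∀ k, Summable fun g => ‖f k g‖) :
    Summable fun G : Fin n → ι => ‖∏ k, f k (G k)‖ := by
  induction n with
  | zero => exact (hasSum_fintype _).summable
  | succ n ih =>
    rw [← (Fin.consEquiv fun _ => ι).summable_iff]
    simpa [Function.comp_def, Fin.prod_univ_succ] using
      (hf 0).mul_norm (ih fun k => hf k.succ)

theorem tsum_fin_pi_prod [CompleteSpace R] {n : ℕ} {f : Fin n → ι → R}
    (hf : ∀ k, Summable fun g => ‖f k g‖) :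
    ∑' G : Fin n → ι, ∏ k, f k (G k) = ∏ k, ∑' g, f k g := by
  induction n with
  | zero => simp
  | succ n ih =>
    rw [← (Fin.consEquiv fun _ => ι).tsum_eq, Fin.prod_univ_succ, ← ih fun k => hf k.succ,
      tsum_mul_tsum_of_summable_norm (hf 0) (summable_norm_fin_pi_prod fun k => hf k.succ)]
    simp [Fin.prod_univ_succ]

end FinPiProduct

theorem Set.BijOn.tsum_eq {α β M : Type*} [AddCommMonoid M] [TopologicalSpace M]
    {f : α → M} {g : β → M} {s : Set α} {t : Set β} {φ : α → β} (hφ : Set.BijOn φ s t)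
    (hf : Function.support f ⊆ s) (hg : Function.support g ⊆ t) (hfg : ∀ x ∈ s, g (φ x) = f x) :
    ∑' x, f x = ∑' y, g y := by
  rw [← tsum_subtype_eq_of_support_subset hf, ← tsum_subtype_eq_of_support_subset hg,
    ← (hφ.equiv φ).tsum_eq]
  exact tsum_congr fun x => (hfg x x.2).symm

theorem summable_exp_neg_mul_add_sq {δ : ℝ} (hδ : 0 < δ) (c : ℝ) :
    Summable fun n : ℤ => rexp (-(π * δ * (n + c) ^ 2)) := by
  have h := ((summable_jacobiTheta₂_term_iff (δ * c * I) (δ * I)).2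
    (by simpa using hδ)).norm.mul_left (rexp (-(π * δ * c ^ 2)))
  refine h.congr fun n => ?_
  rw [norm_jacobiTheta₂_term, ← Real.exp_add]
  congr 1
  simp only [mul_im, mul_re, ofReal_re, ofReal_im, I_re, I_im]
  ring

theorem summable_exp_neg_mul_sum_add_sq {n : ℕ} {δ : ℝ} (hδ : 0 < δ) (c : Fin n → ℝ) :
    Summable fun g : Fin n → ℤ => rexp (-(π * δ * ∑ k, (g k + c k) ^ 2)) := by
  refine (summable_norm_fin_pi_prod fun k => (summable_exp_neg_mul_add_sq hδ (c k)).norm).congr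
    fun g => ?_
  rw [Real.norm_of_nonneg (by positivity), ← Real.exp_sum, Finset.mul_sum,
    ← Finset.sum_neg_distrib]

theorem Matrix.PosDef.exists_pos_mul_sum_sq_le {n : Type*} [Fintype n] {Y : Matrix n n ℝ}
    (hY : Y.PosDef) : ∃ δ > 0, ∀ x : n → ℝ, δ * ∑ k, x k ^ 2 ≤ x ⬝ᵥ Y *ᵥ x := by
  let q : (n → ℝ) → ℝ := fun x => x ⬝ᵥ Y *ᵥ x
  have hq_smul (c : ℝ) (x : n → ℝ) : q (c • x) = c ^ 2 * q x := by
    simp only [q, mulVec_smul, smul_dotProduct, dotProduct_smul, smul_eq_mul]; ring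
  obtain ⟨δ, hδ, hmin⟩ := (isCompact_sphere (0 : EuclideanSpace ℝ n) 1).exists_forall_le'
    (f := fun y => q y.ofLp) (by fun_prop) (a := 0) fun y hy =>
      hY.dotProduct_mulVec_pos fun h => by
        rw [show y = 0 from WithLp.ofLp_injective 2 (by simpa using h)] at hy
        simp at hy
  refine ⟨δ, hδ, fun x => ?_⟩
  rcases eq_or_ne x 0 with rfl | hx
  · simp
  set r := ‖WithLp.toLp 2 x‖
  have hr : 0 < r := norm_pos_iff.2 (by simpa using hx)
  have hsq : ∑ k, x k ^ 2 = r ^ 2 := by simp [r, EuclideanSpace.real_norm_sq_eq]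
  have hδr := hmin (r⁻¹ • WithLp.toLp 2 x) (by
    rw [mem_sphere_zero_iff_norm, norm_smul, Real.norm_of_nonneg (inv_nonneg.2 hr.le),
      inv_mul_cancel₀ hr.ne'])
  simp only [WithLp.ofLp_smul, hq_smul, inv_pow] at hδr
  rw [hsq]
  calc δ * r ^ 2 ≤ (r ^ 2)⁻¹ * q x * r ^ 2 := by gcongr
    _ = q x := by field_simp

theorem im_dotProduct_mulVec_ofReal {n : Type*} [Fintype n] (Z : Matrix n n ℂ) (x : n → ℝ) :
    ((fun i => (x i : ℂ)) ⬝ᵥ Z *ᵥ fun i => (x i : ℂ)).im = x ⬝ᵥ Z.map im *ᵥ x := by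
  simp [dotProduct, mulVec, Complex.im_sum, Finset.mul_sum]

theorem trace_mul_mul_transpose {m n R : Type*} [Fintype m] [Fintype n] [CommSemiring R]
    (V : Matrix m n R) (Z : Matrix n n R) :
    (V * Z * Vᵀ).trace = ∑ i, V i ⬝ᵥ Z *ᵥ V i := by
  simp only [trace, diag, mul_apply, transpose_apply, dotProduct, mulVec, Finset.mul_sum,
    Finset.sum_mul]
  exact Finset.sum_congr rfl fun i _ =>
    Finset.sum_comm.trans (by simp only [mul_comm, mul_left_comm])

theorem trace_mul_mul_transpose_mul {m n R : Type*} [Fintype m] [Fintype n] [CommSemiring R]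
    (M : Matrix m m R) (V : Matrix m n R) (Z : Matrix n n R) :
    (M * V * Z * (M * V)ᵀ).trace = (Mᵀ * M * (V * Z * Vᵀ)).trace := by
  rw [transpose_mul, ← Matrix.mul_assoc, trace_mul_comm]
  simp only [Matrix.mul_assoc]

noncomputable def quadTrace {m n : Type*} [Fintype m] [Fintype n] (Z : Matrix n n ℂ)
    (U : Matrix m n ℤ) : ℂ :=
  (U.map (Int.cast : ℤ → ℂ) * Z * (U.map (Int.cast : ℤ → ℂ))ᵀ).trace

noncomputable def thetaTerm (a b : Fin 2 → ℤ) (Z : Matrix (Fin 2) (Fin 2) ℂ) (g : Fin 2 → ℤ) :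
    ℂ :=
  cexp (π * I *
    ((fun i => (g i : ℂ) + (a i : ℂ) / 2) ⬝ᵥ Z *ᵥ (fun i => (g i : ℂ) + (a i : ℂ) / 2) +
      (fun i => (g i : ℂ) + (a i : ℂ) / 2) ⬝ᵥ (fun i => (b i : ℂ))))

theorem norm_thetaTerm (a b : Fin 2 → ℤ) (Z : Matrix (Fin 2) (Fin 2) ℂ) (g : Fin 2 → ℤ) :
    ‖thetaTerm a b Z g‖ =
      rexp (-(π * ((fun i => g i + a i / 2 : Fin 2 → ℝ) ⬝ᵥ
        Z.map im *ᵥ fun i => g i + a i / 2))) := by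
  rw [thetaTerm, norm_exp, ← im_dotProduct_mulVec_ofReal]
  congr 1
  simp [Complex.mul_re, dotProduct]

theorem summable_norm_thetaTerm {Z : Matrix (Fin 2) (Fin 2) ℂ} (hZ : (Z.map im).PosDef)
    (a b : Fin 2 → ℤ) : Summable fun g => ‖thetaTerm a b Z g‖ := by
  obtain ⟨δ, hδ, hδZ⟩ := hZ.exists_pos_mul_sum_sq_le
  refine (summable_exp_neg_mul_sum_add_sq hδ fun k => (a k : ℝ) / 2).of_nonneg_of_le
    (fun _ => norm_nonneg _) fun g => ?_
  rw [norm_thetaTerm, Real.exp_le_exp, neg_le_neg_iff, mul_assoc]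
  exact mul_le_mul_of_nonneg_left (hδZ _) pi_pos.le

theorem thetaNull_pow {Z : Matrix (Fin 2) (Fin 2) ℂ} (hZ : (Z.map im).PosDef)
    (a b : Fin 2 → ℤ) (n : ℕ) :
    thetaNull a b Z ^ n = ∑' G : Fin n → Fin 2 → ℤ, ∏ i, thetaTerm a b Z (G i) := by
  rw [tsum_fin_pi_prod fun _ => summable_norm_thetaTerm hZ a b, Fin.prod_const]
  rfl

def doubledCoords {m n : Type*} (a : n → ℤ) (G : m → n → ℤ) : Matrix m n ℤ :=
  of fun i k => 2 * G i k + a k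

theorem doubledCoords_injective {m n : Type*} (a : n → ℤ) :
    Function.Injective (doubledCoords (m := m) a) := fun G G' h => by
  funext i k
  have := congrFun (congrFun h i) k
  simp only [doubledCoords, of_apply] at this
  omega

theorem thetaTerm_eq_exp (a b : Fin 2 → ℤ) (Z : Matrix (Fin 2) (Fin 2) ℂ) (g : Fin 2 → ℤ) :
    thetaTerm a b Z g =
      cexp (π * I / 4 * ((fun k => ((2 * g k + a k : ℤ) : ℂ)) ⬝ᵥ
        Z *ᵥ fun k => ((2 * g k + a k : ℤ) : ℂ)) +
        π * I / 2 * ((fun k => 2 * g k + a k) ⬝ᵥ b : ℤ)) := by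
  rw [thetaTerm]
  congr 1
  simp only [dotProduct, mulVec, Fin.sum_univ_two, Int.cast_add, Int.cast_mul, Int.cast_ofNat]
  ring

theorem prod_thetaTerm {m : Type*} [Fintype m] (a b : Fin 2 → ℤ) (Z : Matrix (Fin 2) (Fin 2) ℂ)
    (G : m → Fin 2 → ℤ) :
    ∏ i, thetaTerm a b Z (G i) = cexp (π * I / 4 * quadTrace Z (doubledCoords a G)
      + π * I / 2 * (∑ i, doubledCoords a G i ⬝ᵥ b : ℤ)) := by
  rw [quadTrace, trace_mul_mul_transpose, Int.cast_sum, Finset.mul_sum, Finset.mul_sum,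
    ← Finset.sum_add_distrib, Complex.exp_sum]
  exact Finset.prod_congr rfl fun i _ => thetaTerm_eq_exp a b Z (G i)

def riemannSupport (a b : Fin 2 → ℤ) : Set (Matrix (Fin 4) (Fin 2) ℤ) :=
  {U | (∀ i k, U i k % 2 = a k % 2) ∧ (∑ i, U i ⬝ᵥ b) % 4 = 2}

noncomputable def riemannWeight (a b : Fin 2 → ℤ) (Z : Matrix (Fin 2) (Fin 2) ℂ) :
    Matrix (Fin 4) (Fin 2) ℤ → ℂ :=
  (riemannSupport a b).indicator fun U => 2 * cexp (π * I / 4 * quadTrace Z U)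

theorem support_riemannWeight (a b : Fin 2 → ℤ) (Z : Matrix (Fin 2) (Fin 2) ℂ) :
    Function.support (riemannWeight a b Z) = riemannSupport a b := by
  simp [riemannWeight, Function.support, Complex.exp_ne_zero]

theorem even_sum_of_mem_riemannSupport {a b : Fin 2 → ℤ} {U : Matrix (Fin 4) (Fin 2) ℤ}
    (hU : U ∈ riemannSupport a b) (k : Fin 2) : Even (∑ i, U i k) := by
  have := hU.1 0 k; have := hU.1 1 k; have := hU.1 2 k; have := hU.1 3 k
  rw [Fin.sum_univ_four, Int.even_iff]
  omega

theorem prod_thetaTerm_sub_prod_thetaTerm (a b : Fin 2 → ℤ) (Z : Matrix (Fin 2) (Fin 2) ℂ)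
    (G : Fin 4 → Fin 2 → ℤ) :
    ∏ i, thetaTerm a 0 Z (G i) - ∏ i, thetaTerm a b Z (G i) =
      riemannWeight a b Z (doubledCoords a G) := by
  set m := ∑ i, G i ⬝ᵥ b + 2 * (a ⬝ᵥ b)
  have hm : ∑ i, doubledCoords a G i ⬝ᵥ b = 2 * m := by
    simp only [m, doubledCoords, of_apply, dotProduct, Fin.sum_univ_four, Fin.sum_univ_two]
    ring
  have hsign : cexp (π * I / 2 * ((2 * m : ℤ) : ℂ)) = (-1) ^ m := by
    rw [← exp_pi_mul_I, ← exp_int_mul]; push_cast; ring_nf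
  rw [prod_thetaTerm, prod_thetaTerm, hm]
  simp only [dotProduct_zero, Finset.sum_const_zero, Int.cast_zero, mul_zero, add_zero]
  rw [Complex.exp_add, hsign]
  have hmem : doubledCoords a G ∈ riemannSupport a b ↔ Odd m := by
    simp only [riemannSupport, Set.mem_ofPred_eq]
    rw [hm, Int.odd_iff]
    exact ⟨fun h => by omega, fun h => ⟨fun i k => by simp [doubledCoords], by omega⟩⟩
  rcases Int.even_or_odd m with hm' | hm'
  · rw [hm'.neg_one_zpow, riemannWeight,
      Set.indicator_of_notMem (hmem.not.2 (Int.not_odd_iff_even.2 hm'))]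
    ring
  · rw [hm'.neg_one_zpow, riemannWeight, Set.indicator_of_mem (hmem.2 hm')]
    ring

theorem thetaNull_pow_four_sub {Z : Matrix (Fin 2) (Fin 2) ℂ} (hZ : (Z.map im).PosDef)
    (a b : Fin 2 → ℤ) :
    thetaNull a 0 Z ^ 4 - thetaNull a b Z ^ 4 = ∑' U, riemannWeight a b Z U := by
  rw [thetaNull_pow hZ, thetaNull_pow hZ,
    ← ((summable_norm_fin_pi_prod fun _ => summable_norm_thetaTerm hZ a 0).of_norm).tsum_sub
      (summable_norm_fin_pi_prod fun _ => summable_norm_thetaTerm hZ a b).of_norm]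
  simp only [prod_thetaTerm_sub_prod_thetaTerm]
  refine (doubledCoords_injective a).tsum_eq fun U hU => ?_
  rw [support_riemannWeight] at hU
  refine ⟨fun i k => (U i k - a k) / 2, ?_⟩
  ext i k
  have := hU.1 i k
  simp only [doubledCoords, of_apply]
  omega

def reflectionMatrix : Matrix (Fin 4) (Fin 4) ℤ :=
  !![1, -1, -1, -1; -1, 1, -1, -1; -1, -1, 1, -1; -1, -1, -1, 1]

def hadamardMatrix : Matrix (Fin 4) (Fin 4) ℤ :=
  !![1, 1, 1, 1; 1, 1, -1, -1; 1, -1, 1, -1; 1, -1, -1, 1]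

-- Halving the reflection keeps the parity pattern of the index sets only when
-- `Σᵢ Uᵢ₀ ≡ 0 (mod 4)`, halving the Hadamard matrix only when `Σᵢ Uᵢ₀ ≡ 2 (mod 4)`.
def riemannMatrix (U : Matrix (Fin 4) (Fin 2) ℤ) : Matrix (Fin 4) (Fin 4) ℤ :=
  if (∑ i, U i 0) % 4 = 0 then reflectionMatrix else hadamardMatrix

def riemannMap (U : Matrix (Fin 4) (Fin 2) ℤ) : Matrix (Fin 4) (Fin 2) ℤ :=
  of fun i k => (riemannMatrix U * U) i k / 2

theorem riemannMatrix_transpose (U : Matrix (Fin 4) (Fin 2) ℤ) :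
    (riemannMatrix U)ᵀ = riemannMatrix U := by
  unfold riemannMatrix
  split_ifs <;> ext i j <;> fin_cases i <;> fin_cases j <;> rfl

theorem riemannMatrix_mul_self (U : Matrix (Fin 4) (Fin 2) ℤ) :
    riemannMatrix U * riemannMatrix U = (4 : ℤ) • 1 := by
  unfold riemannMatrix
  split_ifs <;> ext i j <;> fin_cases i <;> fin_cases j <;> rfl

theorem odd_riemannMatrix_apply (U : Matrix (Fin 4) (Fin 2) ℤ) (i j : Fin 4) :
    Odd (riemannMatrix U i j) := by
  unfold riemannMatrix
  split_ifs <;> fin_cases i <;> fin_cases j <;> decide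

theorem even_mul_apply_of_odd {m n p : Type*} [Fintype n] {M : Matrix m n ℤ} {U : Matrix n p ℤ}
    (hM : ∀ i j, Odd (M i j)) {k : p} (hU : Even (∑ j, U j k)) (i : m) :
    Even ((M * U) i k) := by
  have : (M * U) i k = ∑ j, U j k + ∑ j, (M i j - 1) * U j k := by
    simp only [mul_apply, sub_mul, one_mul, Finset.sum_sub_distrib]; ring
  rw [this]
  exact hU.add (Finset.even_sum _ fun j _ => ((hM i j).sub_odd odd_one).mul_right _)

theorem two_smul_riemannMap {U : Matrix (Fin 4) (Fin 2) ℤ} (hU : ∀ k, Even (∑ i, U i k)) :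
    (2 : ℤ) • riemannMap U = riemannMatrix U * U := by
  ext i k
  exact Int.mul_ediv_cancel' (even_mul_apply_of_odd (odd_riemannMatrix_apply U) (hU k) i).two_dvd

theorem riemannMatrix_riemannMap {U : Matrix (Fin 4) (Fin 2) ℤ} (hU : ∀ i, U i 0 % 2 = 1) :
    riemannMatrix (riemannMap U) = riemannMatrix U := by
  have := hU 0; have := hU 1; have := hU 2; have := hU 3
  simp only [riemannMap, riemannMatrix]
  split_ifs <;> simp [Fin.sum_univ_four, reflectionMatrix, hadamardMatrix, mul_apply] at * <;> omega

theorem riemannMap_riemannMap {U : Matrix (Fin 4) (Fin 2) ℤ} (hU : ∀ k, Even (∑ i, U i k))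
    (hU' : ∀ k, Even (∑ i, riemannMap U i k)) (h0 : ∀ i, U i 0 % 2 = 1) :
    riemannMap (riemannMap U) = U := by
  refine smul_right_injective _ (four_ne_zero : (4 : ℤ) ≠ 0) ?_
  calc (4 : ℤ) • riemannMap (riemannMap U) = (2 : ℤ) • (2 : ℤ) • riemannMap (riemannMap U) := by
        rw [smul_smul]; norm_num
    _ = riemannMatrix U * ((2 : ℤ) • riemannMap U) := by
        rw [two_smul_riemannMap hU', riemannMatrix_riemannMap h0, Matrix.mul_smul]
    _ = (4 : ℤ) • U := by
        rw [two_smul_riemannMap hU, ← Matrix.mul_assoc, riemannMatrix_mul_self, Matrix.smul_mul,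
          Matrix.one_mul]

theorem mapsTo_riemannMap :
    Set.MapsTo riemannMap (riemannSupport ![1, 0] ![0, 1]) (riemannSupport ![1, 1] ![1, 1]) ∧
      Set.MapsTo riemannMap (riemannSupport ![1, 1] ![1, 1]) (riemannSupport ![1, 0] ![0, 1]) := by
  constructor <;>
  · intro U hU
    simp only [riemannSupport, riemannMap, riemannMatrix, Set.mem_ofPred_eq] at hU ⊢
    split_ifs <;>
    simp [Fin.forall_fin_succ, Fin.sum_univ_four, dotProduct, reflectionMatrix, hadamardMatrix,
      mul_apply] at * <;>
    omega

theorem riemannMap_riemannMap_of_mem {a b a' b' : Fin 2 → ℤ} (ha : a 0 = 1)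
    {U : Matrix (Fin 4) (Fin 2) ℤ} (hU : U ∈ riemannSupport a b)
    (hU' : riemannMap U ∈ riemannSupport a' b') :
    riemannMap (riemannMap U) = U :=
  riemannMap_riemannMap (even_sum_of_mem_riemannSupport hU)
    (even_sum_of_mem_riemannSupport hU') fun i => by simpa [ha] using hU.1 i 0

theorem bijOn_riemannMap :
    Set.BijOn riemannMap (riemannSupport ![1, 0] ![0, 1]) (riemannSupport ![1, 1] ![1, 1]) :=
  Set.InvOn.bijOn
    ⟨fun _ hU => riemannMap_riemannMap_of_mem rfl hU (mapsTo_riemannMap.1 hU),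
      fun _ hU => riemannMap_riemannMap_of_mem rfl hU (mapsTo_riemannMap.2 hU)⟩
    mapsTo_riemannMap.1 mapsTo_riemannMap.2

theorem quadTrace_riemannMap {U : Matrix (Fin 4) (Fin 2) ℤ} (hU : ∀ k, Even (∑ i, U i k))
    (Z : Matrix (Fin 2) (Fin 2) ℂ) : quadTrace Z (riemannMap U) = quadTrace Z U := by
  set M := (riemannMatrix U).map (Int.castRingHom ℂ)
  set V := U.map (Int.castRingHom ℂ)
  set W := (riemannMap U).map (Int.castRingHom ℂ)
  have hMM : Mᵀ * M = (4 : ℂ) • 1 := by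
    rw [← transpose_map, riemannMatrix_transpose, ← Matrix.map_mul, riemannMatrix_mul_self]
    ext i j
    simp only [map_apply, Matrix.smul_apply, one_apply]
    split_ifs <;> simp
  have hW : (2 : ℂ) • W = M * V := by
    rw [← Matrix.map_mul, ← two_smul_riemannMap hU]
    ext i j; simp [W]
  refine mul_left_cancel₀ (by norm_num : (4 : ℂ) ≠ 0) ?_
  calc 4 * quadTrace Z (riemannMap U) = ((2 : ℂ) • W * Z * ((2 : ℂ) • W)ᵀ).trace := by
        simp only [quadTrace, transpose_smul, Matrix.smul_mul, Matrix.mul_smul, trace_smul,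
          smul_eq_mul, W, Int.coe_castRingHom]
        ring
    _ = 4 * quadTrace Z U := by
        rw [hW, trace_mul_mul_transpose_mul, hMM, smul_mul, one_mul, trace_smul, smul_eq_mul]
        rfl

theorem tsum_riemannWeight_eq (Z : Matrix (Fin 2) (Fin 2) ℂ) :
    ∑' U, riemannWeight ![1, 0] ![0, 1] Z U = ∑' U, riemannWeight ![1, 1] ![1, 1] Z U :=
  bijOn_riemannMap.tsum_eq (support_riemannWeight _ _ Z).le (support_riemannWeight _ _ Z).le
    fun U hU => by
      rw [riemannWeight, riemannWeight, Set.indicator_of_mem hU,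
        Set.indicator_of_mem (mapsTo_riemannMap.1 hU),
        quadTrace_riemannMap (even_sum_of_mem_riemannSupport hU)]

/-- The Riemann relation `θ₇⁴ − θ₈⁴ − θ₉⁴ + θ₁₀⁴ = 0` on `H₂`, where
`θ₇,…,θ₁₀` have characteristics `(1,0,0,0), (1,0,0,1), (1,1,0,0), (1,1,1,1)`. -/
theorem riemann_relation_quartic :
    ∀ Z ∈ SiegelH2,
      thetaNull ![1, 0] ![0, 0] Z ^ 4 - thetaNull ![1, 0] ![0, 1] Z ^ 4 -
          thetaNull ![1, 1] ![0, 0] Z ^ 4 + thetaNull ![1, 1] ![1, 1] Z ^ 4 = 0 := by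
  rintro Z ⟨-, hZ⟩
  have hA := thetaNull_pow_four_sub hZ ![1, 0] ![0, 1]
  have hC := thetaNull_pow_four_sub hZ ![1, 1] ![1, 1]
  rw [tsum_riemannWeight_eq] at hA
  simp only [← Matrix.cons_zero_zero, Matrix.zero_empty] at hA hC
  linear_combination hA - hC
end
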